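/- arXiv:2506.11362 — 2 statements merged into one kernel-verified Lean document; each statement's English description precedes it below -/
import Mathlib

section
/- Let n be a finite-dimensional nilpotent Lie algebra over a field. For every U ∈ n and every derivation D of n, tr((ad U) ∘ D) = 0. -/
/-!
Both `ad U` and `D` are compatible with the lower central series `Cᵏ n`: a derivation maps each
`Cᵏ n` into itself, and `ad U` maps `Cᵏ n` into `Cᵏ⁺¹ n`. Hence `(ad U ∘ D)ᵏ` maps `n` into `Cᵏ n`,
which vanishes for large `k`, so `ad U ∘ D` is nilpotent and its trace is zero.
-/

namespace LieModule

variable {R L M : Type*} [CommRing R] [LieRing L] [LieAlgebra R L]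
  [AddCommGroup M] [Module R M] [LieRingModule L M] [LieModule R L M]

theorem isNilpotent_of_forall_mem_lowerCentralSeries_succ [IsNilpotent L M] {f : Module.End R M}
    (hf : ∀ k, ∀ m ∈ lowerCentralSeries R L M k, f m ∈ lowerCentralSeries R L M (k + 1)) :
    _root_.IsNilpotent f := by
  have pow_apply_mem : ∀ k m, (f ^ k) m ∈ lowerCentralSeries R L M k := by
    intro k
    induction k with
    | zero => simp
    | succ k ih => intro m; rw [pow_succ', Module.End.mul_apply]; exact hf k _ (ih m)
  obtain ⟨k, hk⟩ := IsNilpotent.nilpotent R L M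
  refine ⟨k, LinearMap.ext fun m => ?_⟩
  simpa [hk] using pow_apply_mem k m

end LieModule

namespace LieDerivation

open LieModule

variable {R L : Type*} [CommRing R] [LieRing L] [LieAlgebra R L]

theorem apply_mem_lowerCentralSeries (D : LieDerivation R L L) {k : ℕ} {x : L}
    (hx : x ∈ lowerCentralSeries R L L k) : D x ∈ lowerCentralSeries R L L k := by
  induction k generalizing x with
  | zero => simp
  | succ k ih =>
    rw [lowerCentralSeries_succ, ← LieSubmodule.mem_toSubmodule,
      LieSubmodule.lieIdeal_oper_eq_linear_span'] at hx
    refine Submodule.span_le (p := (lowerCentralSeries R L L (k + 1)).toSubmodule.comap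
      D.toLinearMap) |>.mpr ?_ hx
    rintro _ ⟨a, -, b, hb, rfl⟩
    rw [SetLike.mem_coe, Submodule.mem_comap, coeFn_coe, apply_lie_eq_add, lowerCentralSeries_succ]
    exact add_mem (LieSubmodule.lie_mem_lie (LieSubmodule.mem_top _) (ih hb))
      (LieSubmodule.lie_mem_lie (LieSubmodule.mem_top _) hb)

theorem isNilpotent_ad_comp [LieRing.IsNilpotent L] (D : LieDerivation R L L) (U : L) :
    IsNilpotent (LieAlgebra.ad R L U ∘ₗ D.toLinearMap) :=
  isNilpotent_of_forall_mem_lowerCentralSeries_succ fun _ _ hx => by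
    rw [lowerCentralSeries_succ]
    exact LieSubmodule.lie_mem_lie (LieSubmodule.mem_top U) (D.apply_mem_lowerCentralSeries hx)

end LieDerivation

theorem stmt3_general {K : Type*} [Field K] {n : Type*} [LieRing n] [LieAlgebra K n]
    [LieRing.IsNilpotent n]
    (U : n) (D : LieDerivation K n n) :
    LinearMap.trace K n ((LieAlgebra.ad K n U) ∘ₗ D.toLinearMap) = 0 :=
  (LinearMap.isNilpotent_trace_of_isNilpotent (D.isNilpotent_ad_comp U)).eq_zero

/-- In a finite-dimensional nilpotent Lie algebra, `tr((ad U) ∘ D) = 0`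
for every `U` and every derivation `D`. -/
theorem stmt3 {K : Type*} [Field K] {n : Type*} [LieRing n] [LieAlgebra K n]
    [FiniteDimensional K n] [LieRing.IsNilpotent n]
    (U : n) (D : LieDerivation K n n) :
    LinearMap.trace K n ((LieAlgebra.ad K n U) ∘ₗ D.toLinearMap) = 0 :=
  stmt3_general U D
end

section
/- Let n be a finite-dimensional nilpotent Lie algebra over ℝ, let T : n → n be an invertible linear map preserving every term nⁱ of the lower central series, let Y ∈ n, and let P be a polynomial with constant coefficient 1. Then there exists U ∈ n such that T(U) + P(ad U)(Y) = 0. -/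
/-!
Solve `T U + P(ad U) Y = 0` modulo `nⁱ` by induction on `i`. Changing `U` by `δ ∈ nⁱ` changes
`P(ad U) Y` only modulo `nⁱ⁺¹`, while `T` maps `nⁱ` onto itself, so the error in `nⁱ` can be
absorbed by a correction `δ ∈ nⁱ`. Nilpotency ends the induction at `nᵏ = 0`.
-/

open LieModule LieAlgebra Polynomial

theorem Submodule.map_eq_self_of_injective {K V : Type*} [Field K] [AddCommGroup V]
    [Module K V] [FiniteDimensional K V] {f : V →ₗ[K] V} (hf : Function.Injective f)
    {p : Submodule K V} (hp : ∀ x ∈ p, f x ∈ p) : p.map f = p :=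
  Submodule.eq_of_le_of_finrank_eq (Submodule.map_le_iff_le_comap.2 hp)
    (Submodule.equivMapOfInjective f hf p).finrank_eq.symm

theorem LinearMap.exists_apply_add_eq_zero_of_filtration {K V : Type*} [Field K]
    [AddCommGroup V] [Module K V] [FiniteDimensional K V] (S : ℕ → Submodule K V)
    (hS₀ : S 0 = ⊤) {k : ℕ} (hSk : S k = ⊥)
    (T : V →ₗ[K] V) (hT : Function.Injective T) (hTS : ∀ i, ∀ x ∈ S i, T x ∈ S i)
    (F : V → V) (hF : ∀ i U δ, δ ∈ S i → F (U + δ) - F U ∈ S (i + 1)) :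
    ∃ U, T U + F U = 0 := by
  have approx : ∀ i, ∃ U, T U + F U ∈ S i := by
    intro i
    induction i with
    | zero => exact ⟨0, by simp [hS₀]⟩
    | succ i ih =>
      obtain ⟨U, hU⟩ := ih
      rw [← Submodule.map_eq_self_of_injective hT (hTS i)] at hU
      obtain ⟨w, hw, hTw⟩ := hU
      refine ⟨U + -w, ?_⟩
      convert hF i U (-w) (neg_mem hw) using 1
      rw [map_add, map_neg, hTw]
      abel
  obtain ⟨U, hU⟩ := approx k
  exact ⟨U, by simpa [hSk] using hU⟩

namespace LieAlgebra

variable {R L : Type*} [CommRing R] [LieRing L] [LieAlgebra R L]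

theorem ad_pow_add_sub_mem_lowerCentralSeries {i : ℕ} {δ : L}
    (hδ : δ ∈ lowerCentralSeries R L L i) (U Y : L) (m : ℕ) :
    (ad R L (U + δ) ^ m) Y - (ad R L U ^ m) Y ∈ lowerCentralSeries R L L (i + 1) := by
  induction m with
  | zero => simp
  | succ m ih =>
    have expand : (ad R L (U + δ) ^ (m + 1)) Y - (ad R L U ^ (m + 1)) Y =
        ⁅U + δ, (ad R L (U + δ) ^ m) Y - (ad R L U ^ m) Y⁆ - ⁅(ad R L U ^ m) Y, δ⁆ := by
      simp only [pow_succ', Module.End.mul_apply, ad_apply, lie_sub, add_lie, ← lie_skew δ]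
      abel
    rw [expand]
    refine sub_mem (LieSubmodule.lie_mem _ ih) ?_
    rw [lowerCentralSeries_succ]
    exact LieSubmodule.lie_mem_lie (LieSubmodule.mem_top _) hδ

theorem aeval_ad_add_sub_mem_lowerCentralSeries {i : ℕ} {δ : L}
    (hδ : δ ∈ lowerCentralSeries R L L i) (U Y : L) (P : R[X]) :
    aeval (ad R L (U + δ)) P Y - aeval (ad R L U) P Y ∈ lowerCentralSeries R L L (i + 1) := by
  simp only [aeval_eq_sum_range, LinearMap.sum_apply, LinearMap.smul_apply,
    ← Finset.sum_sub_distrib, ← smul_sub]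
  exact Submodule.sum_mem _ fun m _ ↦
    Submodule.smul_mem _ _ (ad_pow_add_sub_mem_lowerCentralSeries hδ U Y m)

end LieAlgebra

theorem stmt8_general {n : Type*} [LieRing n] [LieAlgebra ℝ n] [FiniteDimensional ℝ n]
    [LieRing.IsNilpotent n]
    (T : n →ₗ[ℝ] n) (hT : Function.Bijective T)
    (hTfil : ∀ i : ℕ, ∀ x ∈ LieModule.lowerCentralSeries ℝ n n i,
      T x ∈ LieModule.lowerCentralSeries ℝ n n i)
    (Y : n) (P : Polynomial ℝ) :
    ∃ U : n, T U + (Polynomial.aeval (LieAlgebra.ad ℝ n U) P) Y = 0 := by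
  obtain ⟨k, hk⟩ := LieModule.IsNilpotent.nilpotent ℝ n n
  exact LinearMap.exists_apply_add_eq_zero_of_filtration
    (fun i ↦ (lowerCentralSeries ℝ n n i).toSubmodule) (by simp)
    ((LieSubmodule.toSubmodule_eq_bot _).2 hk) T hT.injective hTfil (fun U ↦ aeval (ad ℝ n U) P Y)
    fun i U _ hδ ↦ aeval_ad_add_sub_mem_lowerCentralSeries hδ U Y P

/-- In a finite-dimensional nilpotent real Lie algebra, if `T` is an
invertible linear map preserving every term of the lower central series, `Y ∈ n`, and
`P` is a polynomial with constant coefficient `1`, then `T U + P(ad U) Y = 0` has a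
solution `U`. -/
theorem stmt8 {n : Type*} [LieRing n] [LieAlgebra ℝ n] [FiniteDimensional ℝ n]
    [LieRing.IsNilpotent n]
    (T : n →ₗ[ℝ] n) (hT : Function.Bijective T)
    (hTfil : ∀ i : ℕ, ∀ x ∈ LieModule.lowerCentralSeries ℝ n n i,
      T x ∈ LieModule.lowerCentralSeries ℝ n n i)
    (Y : n) (P : Polynomial ℝ) (hP : P.coeff 0 = 1) :
    ∃ U : n, T U + (Polynomial.aeval (LieAlgebra.ad ℝ n U) P) Y = 0 :=
  stmt8_general T hT hTfil Y P
end
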